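/- Let ω(ξ) = ξ/(1+ξ²) and, for η > 1, r(η) = √((η²+3)/(η²-1)) and H(η) = 4ω(η) − ω(r(η)) − ω(4η − r(η)). Then there exists a unique η₀ > 2 such that H(η₀) = 0; moreover H is strictly decreasing on [2,∞), H(2) > 0, and H(η) → −1/2 as η → ∞. -/

import Mathlib

noncomputable def ω : ℝ → ℝ := fun ξ => ξ / (1 + ξ ^ 2)

noncomputable def r : ℝ → ℝ := fun η => Real.sqrt ((η ^ 2 + 3) / (η ^ 2 - 1))

noncomputable def H : ℝ → ℝ := fun η => 4 * ω η - ω (r η) - ω (4 * η - r η)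

noncomputable def ωd : ℝ → ℝ := fun ξ => (1 - ξ ^ 2) / (1 + ξ ^ 2) ^ 2

lemma omega_le_half (ξ : ℝ) : ω ξ ≤ 1 / 2 := by
  unfold ω
  rw [div_le_iff₀ (by positivity)]
  nlinarith [sq_nonneg (ξ - 1)]

lemma continuous_omega : Continuous ω := by
  unfold ω
  exact continuous_id.div (by continuity) (fun x => by positivity)

lemma hasDerivAt_omega (ξ : ℝ) : HasDerivAt ω (ωd ξ) ξ := by
  have h : HasDerivAt ω _ ξ := (hasDerivAt_id' ξ).div ((hasDerivAt_pow 2 ξ).const_add 1) (by positivity : (1:ℝ) + ξ ^ 2 ≠ 0)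
  convert h using 1
  unfold ωd
  field_simp
  ring

lemma r_gt_one {x : ℝ} (hx : 2 ≤ x) : 1 < r x := by
  have hd : (0:ℝ) < x ^ 2 - 1 := by nlinarith
  unfold r
  rw [Real.lt_sqrt (by norm_num), lt_div_iff₀ hd]
  nlinarith

lemma r_le {x : ℝ} (hx : 2 ≤ x) : r x ≤ 153 / 100 := by
  have hd : (0:ℝ) < x ^ 2 - 1 := by nlinarith
  unfold r
  rw [show (153:ℝ)/100 = Real.sqrt ((153/100)^2) by rw [Real.sqrt_sq (by norm_num)]]
  apply Real.sqrt_le_sqrt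
  rw [div_le_iff₀ hd]
  nlinarith

lemma r_sq {x : ℝ} (hx : 2 ≤ x) : (r x) ^ 2 = (x ^ 2 + 3) / (x ^ 2 - 1) := by
  have hd : (0:ℝ) < x ^ 2 - 1 := by nlinarith
  unfold r
  rw [Real.sq_sqrt (by positivity)]

lemma hasDerivAt_r {x : ℝ} (hx : 2 ≤ x) :
    HasDerivAt r (-4 * x / (r x * (x ^ 2 - 1) ^ 2)) x := by
  have hd : (0:ℝ) < x ^ 2 - 1 := by nlinarith
  have hq : (0:ℝ) < (x ^ 2 + 3) / (x ^ 2 - 1) := by positivity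
  have h1 : HasDerivAt (fun y : ℝ => (y ^ 2 + 3) / (y ^ 2 - 1)) (-8 * x / (x ^ 2 - 1) ^ 2) x := by
    have h : HasDerivAt (fun y : ℝ => (y ^ 2 + 3) / (y ^ 2 - 1)) _ x := ((hasDerivAt_pow 2 x).add_const 3).div ((hasDerivAt_pow 2 x).sub_const 1) (ne_of_gt hd)
    convert h using 1
    field_simp
    ring
  have h2 : HasDerivAt r _ x := (Real.hasDerivAt_sqrt (ne_of_gt hq)).comp x h1
  have hrx : 0 < r x := lt_trans one_pos (r_gt_one hx)
  convert h2 using 1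
  unfold r
  rw [show Real.sqrt ((x ^ 2 + 3) / (x ^ 2 - 1)) = r x from rfl]
  field_simp
  ring

lemma hasDerivAt_H {x : ℝ} (hx : 2 ≤ x) :
    HasDerivAt H (4 * ωd x - ωd (r x) * (-4 * x / (r x * (x ^ 2 - 1) ^ 2))
      - ωd (4 * x - r x) * (4 - -4 * x / (r x * (x ^ 2 - 1) ^ 2))) x := by
  have hr := hasDerivAt_r hx
  have h1 := (hasDerivAt_omega x).const_mul 4
  have h2 := (hasDerivAt_omega (r x)).comp x hr
  have h3inner : HasDerivAt (fun y : ℝ => 4 * y - r y) (4 - -4 * x / (r x * (x ^ 2 - 1) ^ 2)) x := by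
    have h : HasDerivAt (fun y : ℝ => 4 * y - r y) _ x := ((hasDerivAt_id x).const_mul 4).sub hr
    convert h using 1
    ring
  have h3 := (hasDerivAt_omega (4 * x - r x)).comp x h3inner
  exact (h1.sub h2).sub h3

lemma deriv_H_neg {x : ℝ} (hx : 2 < x) : deriv H x < 0 := by
  have hx2 : 2 ≤ x := le_of_lt hx
  rw [(hasDerivAt_H hx2).deriv]
  have hd : (0:ℝ) < x ^ 2 - 1 := by nlinarith
  have hs1 : 1 < r x := r_gt_one hx2
  have hs2 : r x ≤ 153 / 100 := r_le hx2
  have hs0 : 0 < r x := lt_trans one_pos hs1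
  set s := r x with hs
  set rd := -4 * x / (s * (x ^ 2 - 1) ^ 2) with hrd
  have hD : 0 < s * (x ^ 2 - 1) ^ 2 := by positivity
  have hrd_neg : rd < 0 := div_neg_of_neg_of_pos (by nlinarith) hD
  have hrd_ge : -1 ≤ rd := by
    rw [hrd, le_div_iff₀ hD]
    have h1 : (x ^ 2 - 1) ^ 2 ≤ s * (x ^ 2 - 1) ^ 2 :=
      le_mul_of_one_le_left (by positivity) hs1.le
    nlinarith [sq_nonneg (x - 2), sq_nonneg (x ^ 2 - 3)]
  -- term A
  have hA : 4 * ωd x ≤ -(1 / (2 * x ^ 2)) := by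
    unfold ωd
    rw [show -(1 / (2 * x ^ 2)) = (-1) / (2 * x ^ 2) by ring,
      show 4 * ((1 - x ^ 2) / (1 + x ^ 2) ^ 2) = (4 * (1 - x ^ 2)) / (1 + x ^ 2) ^ 2 by ring,
      div_le_div_iff₀ (by positivity) (by positivity)]
    nlinarith [sq_nonneg x, sq_nonneg (x^2 - 4)]
  -- term B
  have hωds : ωd s < 0 := div_neg_of_neg_of_pos (by nlinarith) (by positivity)
  have hB : 0 ≤ ωd s * rd := le_of_lt (mul_pos_of_neg_of_neg hωds hrd_neg)
  -- term C
  set y := 4 * x - s with hy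
  have hy1 : 4 * x - 153 / 100 ≤ y := by rw [hy]; linarith
  have hy0 : (1:ℝ) < y := by nlinarith
  have hωdy : -ωd y ≤ 1 / y ^ 2 := by
    unfold ωd
    rw [show -((1 - y ^ 2) / (1 + y ^ 2) ^ 2) = (y ^ 2 - 1) / (1 + y ^ 2) ^ 2 by ring,
      div_le_div_iff₀ (by positivity) (by positivity)]
    nlinarith
  have hωdy0 : 0 ≤ -ωd y := by
    have : ωd y ≤ 0 := div_nonpos_of_nonpos_of_nonneg (by nlinarith) (by positivity)
    linarith
  have h4rd : 4 - rd ≤ 5 := by linarith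
  have h4rd0 : 0 < 4 - rd := by linarith
  have hC1 : (-ωd y) * (4 - rd) ≤ (1 / y ^ 2) * 5 :=
    mul_le_mul hωdy h4rd (le_of_lt h4rd0) (by positivity)
  have hC2 : (1 / y ^ 2) * 5 < 1 / (2 * x ^ 2) := by
    rw [show (1 / y ^ 2) * 5 = 5 / y ^ 2 by ring, div_lt_div_iff₀ (by positivity) (by positivity)]
    nlinarith [sq_nonneg (x - 2)]
  have hC : -(ωd y * (4 - rd)) < 1 / (2 * x ^ 2) := by
    calc -(ωd y * (4 - rd)) = (-ωd y) * (4 - rd) := by ring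
    _ ≤ (1 / y ^ 2) * 5 := hC1
    _ < 1 / (2 * x ^ 2) := hC2
  linarith

lemma contOn_r {s : Set ℝ} (hs : s ⊆ Set.Ici 2) : ContinuousOn r s := by
  apply Real.continuous_sqrt.comp_continuousOn
  apply ContinuousOn.div (by fun_prop) (by fun_prop)
  intro x hx
  have : (2:ℝ) ≤ x := hs hx
  nlinarith

lemma contOn_H {s : Set ℝ} (hs : s ⊆ Set.Ici 2) : ContinuousOn H s := by
  have hr := contOn_r hs
  unfold H
  apply ContinuousOn.sub
  apply ContinuousOn.sub
  · exact (continuous_const.mul continuous_omega).continuousOn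
  · exact continuous_omega.comp_continuousOn hr
  · exact continuous_omega.comp_continuousOn
      ((continuous_const.mul continuous_id).continuousOn.sub hr)

lemma H_anti : StrictAntiOn H (Set.Ici 2) := by
  apply strictAntiOn_of_deriv_neg (convex_Ici 2) (contOn_H le_rfl)
  intro x hx
  rw [interior_Ici] at hx
  exact deriv_H_neg hx

lemma H2_pos : 0 < H 2 := by
  have h1 : ω 2 = 2 / 5 := by unfold ω; norm_num
  have h2 := omega_le_half (r 2)
  have h3 := omega_le_half (4 * 2 - r 2)
  unfold H
  rw [h1]
  linarith

lemma omega_tendsto_zero : Filter.Tendsto ω Filter.atTop (nhds 0) := by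
  apply tendsto_of_tendsto_of_tendsto_of_le_of_le' tendsto_const_nhds tendsto_inv_atTop_zero
  · filter_upwards [Filter.eventually_ge_atTop (0:ℝ)] with x hx
    unfold ω; positivity
  · filter_upwards [Filter.eventually_ge_atTop (1:ℝ)] with x hx
    unfold ω
    rw [div_le_iff₀ (by positivity), inv_mul_eq_div, le_div_iff₀ (by linarith)]
    nlinarith

lemma r_tendsto_one : Filter.Tendsto r Filter.atTop (nhds 1) := by
  have hq : Filter.Tendsto (fun x : ℝ => (x ^ 2 + 3) / (x ^ 2 - 1)) Filter.atTop (nhds 1) := by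
    have h1 : Filter.Tendsto (fun x : ℝ => 1 + 4 / (x ^ 2 - 1)) Filter.atTop (nhds (1 + 0)) := by
      apply Filter.Tendsto.const_add
      apply Filter.Tendsto.div_atTop tendsto_const_nhds
      apply Filter.tendsto_atTop_add_const_right
      exact Filter.tendsto_pow_atTop (by norm_num)
    rw [add_zero] at h1
    apply h1.congr'
    filter_upwards [Filter.eventually_ge_atTop (2:ℝ)] with x hx
    have hd : (0:ℝ) < x ^ 2 - 1 := by nlinarith
    field_simp
    ring
  have := (Real.continuous_sqrt.continuousAt (x := 1)).tendsto.comp hq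
  rw [Real.sqrt_one] at this
  exact this

lemma H_tendsto : Filter.Tendsto H Filter.atTop (nhds (-(1 / 2))) := by
  have h1 : Filter.Tendsto (fun x : ℝ => 4 * ω x) Filter.atTop (nhds (4 * 0)) :=
    omega_tendsto_zero.const_mul 4
  have h2 : Filter.Tendsto (fun x : ℝ => ω (r x)) Filter.atTop (nhds (ω 1)) :=
    (continuous_omega.continuousAt.tendsto).comp r_tendsto_one
  have harg : Filter.Tendsto (fun x : ℝ => 4 * x - r x) Filter.atTop Filter.atTop := by
    apply Filter.tendsto_atTop_mono' _ _ (Filter.tendsto_atTop_add_const_right _ (-2)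
      (Filter.tendsto_id.const_mul_atTop (by norm_num : (0:ℝ) < 4)))
    filter_upwards [Filter.eventually_ge_atTop (2:ℝ)] with x hx
    have := r_le hx
    simp only [id]
    linarith
  have h3 : Filter.Tendsto (fun x : ℝ => ω (4 * x - r x)) Filter.atTop (nhds 0) :=
    omega_tendsto_zero.comp harg
  have := (h1.sub h2).sub h3
  have hω1 : ω 1 = 1 / 2 := by unfold ω; norm_num
  rw [hω1] at this
  rw [show (4:ℝ) * 0 - 1 / 2 - 0 = -(1 / 2) by norm_num] at this
  exact this

theorem anomalous_resonance_exists_unique :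
    (∃! η₀ : ℝ, 2 < η₀ ∧ H η₀ = 0) ∧
    StrictAntiOn H (Set.Ici 2) ∧
    0 < H 2 ∧
    Filter.Tendsto H Filter.atTop (nhds (-(1 / 2))) := by
  refine ⟨?_, H_anti, H2_pos, H_tendsto⟩
  -- find M ≥ 2 with H M < 0
  have hev : ∀ᶠ x : ℝ in Filter.atTop, H x < 0 :=
    H_tendsto.eventually_lt_const (by norm_num)
  obtain ⟨M, hM2, hHM⟩ := (hev.and (Filter.eventually_ge_atTop (2:ℝ))).exists
  have hM2' : (2:ℝ) ≤ M := hHM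
  have hzero : (0:ℝ) ∈ Set.Icc (H M) (H 2) := ⟨le_of_lt hM2, le_of_lt H2_pos⟩
  have hcont : ContinuousOn H (Set.Icc 2 M) := contOn_H (fun x hx => hx.1)
  obtain ⟨c, hc, hHc⟩ := intermediate_value_Icc' hM2' hcont hzero
  have hc2 : 2 < c := by
    rcases eq_or_lt_of_le hc.1 with h | h
    · exfalso; rw [← h] at hHc; linarith [H2_pos]
    · exact h
  refine ⟨c, ⟨hc2, hHc⟩, ?_⟩
  intro y hy
  exact H_anti.injOn (le_of_lt hy.1) (le_of_lt hc2) (hy.2.trans hHc.symm)
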